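/- (Query lower bound form of the main theorem.) With the query model as defined in the context, let (Π_y)_{y ∈ Fin N} be orthogonal projections on H with pairwise orthogonal ranges, and let ψ be the final state of the q-query algorithm. If the success probability satisfies ∑_{y ∈ Fin N} ‖(Π_y ⊗ |e_y⟩⟨e_y|) ψ‖² ≥ p for some real p ≥ 0, then q ≥ p·N − 1. In other words, any algorithm that p-solves the N-phase distinguishing problem must make at least p·N − 1 queries. -/

import Mathlib

open scoped Kronecker Matrix

noncomputable section

/-- `ω N = exp(2πi/N)`, the primitive `N`-th root of unity. -/
def ω (N : ℕ) : ℂ := Complex.exp (2 * Real.pi * Complex.I / N)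

/-- The computational (standard) basis vector `e_y` of `EuclideanSpace ℂ (Fin N)`. -/
def e (N : ℕ) (y : Fin N) : EuclideanSpace ℂ (Fin N) := EuclideanSpace.single y 1

/-- The Fourier basis vector `k̂ = (1/√N) ∑_y ω_N^{k·y} • e_y`. -/
def fHat (N : ℕ) (k : Fin N) : EuclideanSpace ℂ (Fin N) :=
  (↑(Real.sqrt N))⁻¹ • ∑ y : Fin N, ω N ^ ((k : ℕ) * (y : ℕ)) • e N y

/-- The tensor product of two Euclidean vectors, realized concretely:
`(x ⊗ z) (i, j) = x i * z j`. -/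
def tp {ι κ : Type*} [Fintype ι] [Fintype κ]
    (x : EuclideanSpace ℂ ι) (z : EuclideanSpace ℂ κ) : EuclideanSpace ℂ (ι × κ) :=
  (EuclideanSpace.equiv (ι × κ) ℂ).symm fun p => x p.1 * z p.2

variable {ιV ιW : Type*} [Fintype ιV] [DecidableEq ιV] [Fintype ιW] [DecidableEq ιW]

/-- The matrix `|u⟩⟨u|` of the orthogonal projection `P_u` onto `ℂ ∙ u`
(for a unit vector `u`). -/
def PuM (u : EuclideanSpace ℂ ιV) : Matrix ιV ιV ℂ :=
  Matrix.of fun i j => u i * star (u j)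

/-- The matrix of `U_y = ω_N^y • P_u + (id - P_u)` on `V`. -/
def UyM (N : ℕ) (u : EuclideanSpace ℂ ιV) (y : Fin N) : Matrix ιV ιV ℂ :=
  ω N ^ (y : ℕ) • PuM u + (1 - PuM u)

/-- The matrix of the controlled unitary `cU_y = |0⟩⟨0| ⊗ id_V + |1⟩⟨1| ⊗ U_y` on `ℂ² ⊗ V`. -/
def cUyM (N : ℕ) (u : EuclideanSpace ℂ ιV) (y : Fin N) : Matrix (Fin 2 × ιV) (Fin 2 × ιV) ℂ :=
  Matrix.single 0 0 (1 : ℂ) ⊗ₖ (1 : Matrix ιV ιV ℂ)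
    + Matrix.single 1 1 (1 : ℂ) ⊗ₖ UyM N u y

/-- The matrix of the coherent oracle `c𝔘 = ∑_y (cU_y ⊗ id_W) ⊗ |e_y⟩⟨e_y|` on
`H ⊗ EuclideanSpace ℂ (Fin N)`, where `H = ℂ² ⊗ V ⊗ W`. -/
def oracleM (N : ℕ) (u : EuclideanSpace ℂ ιV) (ιW : Type*) [Fintype ιW] [DecidableEq ιW] :
    Matrix (((Fin 2 × ιV) × ιW) × Fin N) (((Fin 2 × ιV) × ιW) × Fin N) ℂ :=
  ∑ y : Fin N, (cUyM N u y ⊗ₖ (1 : Matrix ιW ιW ℂ)) ⊗ₖ Matrix.single y y (1 : ℂ)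

end

noncomputable section

/-- The total operator (as a matrix) of a `q`-query algorithm:
`algOp A orc q = (A_q ⊗ id) * orc * (A_{q-1} ⊗ id) * ⋯ * orc * (A_0 ⊗ id)`. -/
def algOp {idx : Type*} [Fintype idx] [DecidableEq idx] {N : ℕ}
    (A : ℕ → Matrix idx idx ℂ) (orc : Matrix (idx × Fin N) (idx × Fin N) ℂ) :
    ℕ → Matrix (idx × Fin N) (idx × Fin N) ℂ
  | 0 => A 0 ⊗ₖ (1 : Matrix (Fin N) (Fin N) ℂ)
  | q + 1 => (A (q + 1) ⊗ₖ (1 : Matrix (Fin N) (Fin N) ℂ)) * orc * algOp A orc q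

end

/-!
Write the register in the Fourier basis. Since `cU_y ⊗ id_W = 1 + (ω^y - 1) • Q` for the
projection `Q = |1⟩⟨1| ⊗ P_u ⊗ id_W`, and multiplying the coordinates by `ω^y` sends `k̂` to
`(k+1)̂`, a query maps `v ⊗ k̂` to `(v - Q v) ⊗ k̂ + Q v ⊗ (k+1)̂`, while the `A_i` only act on `H`.
So after `q` queries the state is `∑_{k ≤ q} φ_k ⊗ k̂` with `∑ ‖φ_k‖² = 1`. All coordinates of
`k̂` have modulus `1/√N`, so Cauchy–Schwarz over the `q + 1` populated indices and Bessel's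
inequality for the orthogonal projections `Π_y` bound the success probability by `(q + 1)/N`.
-/

open Matrix

section TensorProduct

variable {ι κ : Type*} [Fintype ι] [Fintype κ]

@[simp]
lemma tp_apply (x : EuclideanSpace ℂ ι) (z : EuclideanSpace ℂ κ) (p : ι × κ) :
    tp x z p = x p.1 * z p.2 := rfl

lemma tp_add_left (x x' : EuclideanSpace ℂ ι) (z : EuclideanSpace ℂ κ) :
    tp (x + x') z = tp x z + tp x' z := by
  ext; simp [add_mul]

lemma tp_sub_left (x x' : EuclideanSpace ℂ ι) (z : EuclideanSpace ℂ κ) :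
    tp (x - x') z = tp x z - tp x' z := by
  ext; simp [sub_mul]

lemma tp_smul_left (c : ℂ) (x : EuclideanSpace ℂ ι) (z : EuclideanSpace ℂ κ) :
    tp (c • x) z = c • tp x z := by
  ext; simp [mul_assoc]

lemma tp_smul_right (c : ℂ) (x : EuclideanSpace ℂ ι) (z : EuclideanSpace ℂ κ) :
    tp x (c • z) = c • tp x z := by
  ext; simp [mul_left_comm]

lemma tp_zero_left (z : EuclideanSpace ℂ κ) : tp (0 : EuclideanSpace ℂ ι) z = 0 := by
  ext; simp

lemma tp_sum_left {α : Type*} (s : Finset α) (x : α → EuclideanSpace ℂ ι)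
    (z : EuclideanSpace ℂ κ) : tp (∑ a ∈ s, x a) z = ∑ a ∈ s, tp (x a) z := by
  ext; simp [Finset.sum_mul]

lemma inner_tp (x x' : EuclideanSpace ℂ ι) (z z' : EuclideanSpace ℂ κ) :
    inner ℂ (tp x z) (tp x' z') = inner ℂ x x' * inner ℂ z z' := by
  simp only [PiLp.inner_apply, RCLike.inner_apply, tp_apply, Fintype.sum_prod_type,
    Finset.sum_mul_sum, map_mul]
  congr! 2 with i _ j _
  ring

lemma norm_tp (x : EuclideanSpace ℂ ι) (z : EuclideanSpace ℂ κ) :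
    ‖tp x z‖ = ‖x‖ * ‖z‖ := by
  rw [← sq_eq_sq₀ (norm_nonneg _) (by positivity), mul_pow]
  have h := inner_tp x x z z
  rw [inner_self_eq_norm_sq_to_K, inner_self_eq_norm_sq_to_K, inner_self_eq_norm_sq_to_K] at h
  exact_mod_cast h

lemma toEuclideanLin_kronecker_tp [DecidableEq ι] [DecidableEq κ] (M : Matrix ι ι ℂ)
    (B : Matrix κ κ ℂ) (x : EuclideanSpace ℂ ι) (z : EuclideanSpace ℂ κ) :
    toEuclideanLin (M ⊗ₖ B) (tp x z) = tp (toEuclideanLin M x) (toEuclideanLin B z) := by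
  ext ⟨i, j⟩
  simp only [ofLp_toLpLin, toLin'_apply, tp_apply, mulVec, dotProduct,
    kroneckerMap_apply, Fintype.sum_prod_type, Finset.sum_mul_sum]
  congr! 2 with a _ b _
  ring

end TensorProduct

namespace LinearMap.IsSymmetricProjection

variable {𝕜 E : Type*} [RCLike 𝕜] [NormedAddCommGroup E] [InnerProductSpace 𝕜 E]
  {T : E →ₗ[𝕜] E}

lemma inner_map_eq_inner_map_map (hT : T.IsSymmetricProjection) (x y : E) :
    inner 𝕜 (T x) y = inner 𝕜 (T x) (T y) := by
  rw [hT.isSymmetric x (T y), ← Module.End.mul_apply, hT.isIdempotentElem.eq, hT.isSymmetric]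

lemma re_inner_map_self (hT : T.IsSymmetricProjection) (x : E) :
    RCLike.re (inner 𝕜 (T x) x) = ‖T x‖ ^ 2 := by
  rw [hT.inner_map_eq_inner_map_map, inner_self_eq_norm_sq]

lemma norm_sub_map_add_map_sq (hT : T.IsSymmetricProjection) (x y : E) :
    ‖x - T x + T y‖ ^ 2 = ‖x - T x‖ ^ 2 + ‖T y‖ ^ 2 := by
  have horth : inner 𝕜 (x - T x) (T y) = 0 := by
    rw [inner_sub_left, ← hT.isSymmetric, hT.inner_map_eq_inner_map_map, sub_self]
  simpa only [sq] using norm_add_sq_eq_norm_sq_add_norm_sq_of_inner_eq_zero _ _ horth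

lemma norm_sub_map_sq_add_norm_map_sq (hT : T.IsSymmetricProjection) (x : E) :
    ‖x - T x‖ ^ 2 + ‖T x‖ ^ 2 = ‖x‖ ^ 2 := by
  simpa using (hT.norm_sub_map_add_map_sq x x).symm

lemma norm_map_le (hT : T.IsSymmetricProjection) (x : E) : ‖T x‖ ≤ ‖x‖ := by
  refine pow_le_pow_iff_left₀ (norm_nonneg _) (norm_nonneg _) two_ne_zero |>.mp ?_
  rw [← hT.norm_sub_map_sq_add_norm_map_sq x]
  exact le_add_of_nonneg_left (sq_nonneg _)

lemma sum {ι : Type*} (s : Finset ι) {T : ι → E →ₗ[𝕜] E}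
    (hT : ∀ i, (T i).IsSymmetricProjection) (horth : ∀ i j, i ≠ j → T i * T j = 0) :
    (∑ i ∈ s, T i).IsSymmetricProjection where
  isIdempotentElem := by
    rw [IsIdempotentElem, Finset.sum_mul_sum]
    refine Finset.sum_congr rfl fun i hi => ?_
    rw [Finset.sum_eq_single_of_mem i hi fun j _ hji => horth i j hji.symm,
      (hT i).isIdempotentElem.eq]
  isSymmetric := isSymmetric_sum s fun i _ => (hT i).isSymmetric

lemma sum_norm_map_sq_le {ι : Type*} (s : Finset ι) {T : ι → E →ₗ[𝕜] E}
    (hT : ∀ i, (T i).IsSymmetricProjection) (horth : ∀ i j, i ≠ j → T i * T j = 0) (x : E) :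
    ∑ i ∈ s, ‖T i x‖ ^ 2 ≤ ‖x‖ ^ 2 := by
  have hR := sum s hT horth
  calc ∑ i ∈ s, ‖T i x‖ ^ 2 = RCLike.re (inner 𝕜 ((∑ i ∈ s, T i) x) x) := by
        simp only [LinearMap.sum_apply, sum_inner, map_sum,
          fun i => (hT i).re_inner_map_self x]
    _ = ‖(∑ i ∈ s, T i) x‖ ^ 2 := hR.re_inner_map_self x
    _ ≤ ‖x‖ ^ 2 := pow_le_pow_left₀ (norm_nonneg _) (hR.norm_map_le x) 2

end LinearMap.IsSymmetricProjection

namespace Matrix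

variable {𝕜 n : Type*} [RCLike 𝕜] [Fintype n] [DecidableEq n]

lemma isSymmetricProjection_toEuclideanLin {P : Matrix n n 𝕜} (hsa : Pᴴ = P)
    (hidem : P * P = P) : (toEuclideanLin P).IsSymmetricProjection where
  isIdempotentElem := by rw [IsIdempotentElem, Module.End.mul_eq_comp, ← toLpLin_mul_same, hidem]
  isSymmetric := isSymmetric_toEuclideanLin_iff.mpr hsa

lemma norm_toEuclideanLin_of_mem_unitaryGroup {A : Matrix n n 𝕜} (hA : A ∈ unitaryGroup n 𝕜)
    (x : EuclideanSpace 𝕜 n) : ‖toEuclideanLin A x‖ = ‖x‖ :=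
  ContinuousLinearMap.norm_map_of_mem_unitary
    (Unitary.map_mem (toEuclideanCLM (n := n) (𝕜 := 𝕜)) hA) x

end Matrix

section Fourier

variable {N : ℕ}

lemma norm_e (y : Fin N) : ‖e N y‖ = 1 := by
  rw [e, PiLp.norm_single, norm_one]

lemma fHat_apply (k y : Fin N) :
    fHat N k y = ((√N : ℝ) : ℂ)⁻¹ * ω N ^ ((k : ℕ) * y) := by
  simp [fHat, e, Complex.real_smul, Pi.single_apply]

variable [NeZero N]

lemma isPrimitiveRoot_ω : IsPrimitiveRoot (ω N) N :=
  Complex.isPrimitiveRoot_exp N (NeZero.ne N)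

lemma norm_ω_pow (m : ℕ) : ‖ω N ^ m‖ = 1 := by
  rw [norm_pow, isPrimitiveRoot_ω.norm'_eq_one (NeZero.ne N), one_pow]

lemma ω_pow_mod (m : ℕ) : ω N ^ (m % N) = ω N ^ m := by
  conv_rhs => rw [← Nat.mod_add_div m N, pow_add, pow_mul, isPrimitiveRoot_ω.pow_eq_one, one_pow,
    mul_one]

lemma fHat_add_one_apply (k y : Fin N) : fHat N (k + 1) y = fHat N k y * ω N ^ (y : ℕ) := by
  rw [fHat_apply, fHat_apply, mul_assoc, ← pow_add, Fin.val_add, Fin.val_one', Nat.add_mod_mod,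
    ← ω_pow_mod, Nat.mod_mul_mod, ω_pow_mod]
  ring_nf

lemma norm_fHat_apply (k y : Fin N) : ‖fHat N k y‖ = (√N)⁻¹ := by
  rw [fHat_apply, norm_mul, norm_ω_pow, mul_one, norm_inv, Complex.norm_real, Real.norm_eq_abs,
    abs_of_nonneg (Real.sqrt_nonneg _)]

end Fourier

section Oracle

def phaseProj {ιV : Type*} (u : EuclideanSpace ℂ ιV) (ιW : Type*) [DecidableEq ιW] :
    Matrix ((Fin 2 × ιV) × ιW) ((Fin 2 × ιV) × ιW) ℂ :=
  (single 1 1 1 ⊗ₖ PuM u) ⊗ₖ (1 : Matrix ιW ιW ℂ)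

variable {ιV ιW : Type*} [DecidableEq ιV] [DecidableEq ιW] {N : ℕ} {u : EuclideanSpace ℂ ιV}

lemma cUyM_kronecker_one (u : EuclideanSpace ℂ ιV) (y : Fin N) :
    cUyM N u y ⊗ₖ (1 : Matrix ιW ιW ℂ) = 1 + (ω N ^ (y : ℕ) - 1) • phaseProj u ιW := by
  have hsplit : (single 0 0 1 + single 1 1 1 : Matrix (Fin 2) (Fin 2) ℂ) = 1 := by
    ext a b; fin_cases a <;> fin_cases b <;> simp [one_apply]
  rw [cUyM, UyM, phaseProj, show ω N ^ (y : ℕ) • PuM u + (1 - PuM u)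
      = 1 + (ω N ^ (y : ℕ) - 1) • PuM u by module, kronecker_add, kronecker_smul, ← add_assoc,
    ← add_kronecker, hsplit, one_kronecker_one, add_kronecker, smul_kronecker, one_kronecker_one]

variable [Fintype ιV] [Fintype ιW]

lemma isSymmetricProjection_phaseProj (hu : ‖u‖ = 1) :
    (toEuclideanLin (phaseProj u ιW)).IsSymmetricProjection := by
  have hvec : PuM u = vecMulVec u (star u) := rfl
  have hdot : star (u : ιV → ℂ) ⬝ᵥ u = 1 := by
    rw [dotProduct_comm, ← EuclideanSpace.inner_eq_star_dotProduct, inner_self_eq_norm_sq_to_K, hu]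
    simp
  refine isSymmetricProjection_toEuclideanLin ?_ ?_
  · simp [phaseProj, conjTranspose_kronecker, hvec]
  · rw [phaseProj, ← mul_kronecker_mul, ← mul_kronecker_mul, hvec,
      vecMulVec_mul_vecMulVec, hdot, one_smul, single_mul_single_same, one_mul, one_mul]

lemma toEuclideanLin_single_self (y : Fin N) (f : EuclideanSpace ℂ (Fin N)) :
    toEuclideanLin (single y y 1) f = f y • e N y := by
  ext i
  simp [e, single_mulVec_eq, Pi.single_apply]

lemma tp_eq_sum_smul_e {ι : Type*} [Fintype ι] (x : EuclideanSpace ℂ ι)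
    (f : EuclideanSpace ℂ (Fin N)) : tp x f = ∑ y, f y • tp x (e N y) := by
  ext ⟨i, j⟩
  simp [e, mul_comm]

lemma toEuclideanLin_oracleM_tp (v : EuclideanSpace ℂ ((Fin 2 × ιV) × ιW))
    (f : EuclideanSpace ℂ (Fin N)) :
    toEuclideanLin (oracleM N u ιW) (tp v f)
      = ∑ y, f y • tp (toEuclideanLin (cUyM N u y ⊗ₖ (1 : Matrix ιW ιW ℂ)) v) (e N y) := by
  simp only [oracleM, map_sum, LinearMap.sum_apply, toEuclideanLin_kronecker_tp,
    toEuclideanLin_single_self, tp_smul_right]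

variable [NeZero N]

lemma toEuclideanLin_oracleM_tp_fHat (v : EuclideanSpace ℂ ((Fin 2 × ιV) × ιW)) (k : Fin N) :
    toEuclideanLin (oracleM N u ιW) (tp v (fHat N k))
      = tp (v - toEuclideanLin (phaseProj u ιW) v) (fHat N k)
        + tp (toEuclideanLin (phaseProj u ιW) v) (fHat N (k + 1)) := by
  rw [toEuclideanLin_oracleM_tp, tp_eq_sum_smul_e (v - _), tp_eq_sum_smul_e (toEuclideanLin _ v),
    ← Finset.sum_add_distrib]
  refine Finset.sum_congr rfl fun y _ => ?_
  rw [cUyM_kronecker_one, map_add, map_smul, LinearMap.add_apply, LinearMap.smul_apply,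
    toLpLin_one, LinearMap.id_apply, fHat_add_one_apply, tp_add_left, tp_smul_left, tp_sub_left]
  module

end Oracle

section Kickback

variable {N : ℕ} [NeZero N] {𝕜 E : Type*} [RCLike 𝕜] [NormedAddCommGroup E]
  [InnerProductSpace 𝕜 E]

def phaseKickback (T : E →ₗ[𝕜] E) (φ : Fin N → E) (k : Fin N) : E :=
  φ k - T (φ k) + T (φ (k - 1))

lemma sum_norm_phaseKickback_sq {T : E →ₗ[𝕜] E} (hT : T.IsSymmetricProjection) (φ : Fin N → E) :
    ∑ k, ‖phaseKickback T φ k‖ ^ 2 = ∑ k, ‖φ k‖ ^ 2 := by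
  have hshift : ∑ k, ‖T (φ (k - 1))‖ ^ 2 = ∑ k, ‖T (φ k)‖ ^ 2 :=
    Fintype.sum_equiv (Equiv.subRight 1) _ _ fun _ => rfl
  simp only [phaseKickback, hT.norm_sub_map_add_map_sq, Finset.sum_add_distrib, hshift]
  simp only [← Finset.sum_add_distrib, hT.norm_sub_map_sq_add_norm_map_sq]

lemma phaseKickback_eq_zero (T : E →ₗ[𝕜] E) {φ : Fin N → E} {n : ℕ}
    (hφ : ∀ k : Fin N, n < k → φ k = 0) {k : Fin N} (hk : n + 1 < k) :
    phaseKickback T φ k = 0 := by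
  have hk0 : k ≠ 0 := by rintro rfl; exact absurd hk (Nat.not_lt_zero _)
  rw [phaseKickback, hφ k (by omega), hφ (k - 1) (by rw [Fin.val_sub_one_of_ne_zero hk0]; omega)]
  simp

end Kickback

section Algorithm

variable {ιV ιW : Type*} [Fintype ιV] [DecidableEq ιV] [Fintype ιW] [DecidableEq ιW]
  {N : ℕ} [NeZero N] {u : EuclideanSpace ℂ ιV}

lemma toEuclideanLin_oracleM_sum_tp_fHat (φ : Fin N → EuclideanSpace ℂ ((Fin 2 × ιV) × ιW)) :
    toEuclideanLin (oracleM N u ιW) (∑ k, tp (φ k) (fHat N k))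
      = ∑ k, tp (phaseKickback (toEuclideanLin (phaseProj u ιW)) φ k) (fHat N k) := by
  have hshift : ∑ k, tp (toEuclideanLin (phaseProj u ιW) (φ k)) (fHat N (k + 1))
      = ∑ k, tp (toEuclideanLin (phaseProj u ιW) (φ (k - 1))) (fHat N k) :=
    Fintype.sum_equiv (Equiv.addRight 1) _ _ fun k => by simp
  simp only [map_sum, toEuclideanLin_oracleM_tp_fHat, Finset.sum_add_distrib, hshift,
    phaseKickback, tp_add_left]

lemma exists_algOp_apply_eq_sum_tp_fHat (hu : ‖u‖ = 1)
    {A : ℕ → Matrix ((Fin 2 × ιV) × ιW) ((Fin 2 × ιV) × ιW) ℂ}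
    (hA : ∀ i, A i ∈ unitaryGroup ((Fin 2 × ιV) × ιW) ℂ)
    {φ₀ : EuclideanSpace ℂ ((Fin 2 × ιV) × ιW)} (hφ₀ : ‖φ₀‖ = 1) (n : ℕ) :
    ∃ φ : Fin N → EuclideanSpace ℂ ((Fin 2 × ιV) × ιW),
      toEuclideanLin (algOp A (oracleM N u ιW) n) (tp φ₀ (fHat N 0)) = ∑ k, tp (φ k) (fHat N k)
      ∧ (∀ k : Fin N, n < k → φ k = 0) ∧ ∑ k, ‖φ k‖ ^ 2 = 1 := by
  induction n with
  | zero =>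
    refine ⟨Pi.single 0 (toEuclideanLin (A 0) φ₀), ?_, fun k hk => ?_, ?_⟩
    · rw [algOp, toEuclideanLin_kronecker_tp, toLpLin_one, LinearMap.id_apply,
        Fintype.sum_eq_single 0 fun k hk => by rw [Pi.single_eq_of_ne hk, tp_zero_left],
        Pi.single_eq_same]
    · exact Pi.single_eq_of_ne (Fin.pos_iff_ne_zero.mp hk) _
    · rw [Fintype.sum_eq_single 0 fun k hk => by rw [Pi.single_eq_of_ne hk, norm_zero,
        zero_pow two_ne_zero], Pi.single_eq_same, norm_toEuclideanLin_of_mem_unitaryGroup (hA 0),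
        hφ₀, one_pow]
  | succ n ih =>
    obtain ⟨φ, hψ, hsupp, hnorm⟩ := ih
    refine ⟨fun k => toEuclideanLin (A (n + 1))
      (phaseKickback (toEuclideanLin (phaseProj u ιW)) φ k), ?_, fun k hk => ?_, ?_⟩
    · rw [algOp, toLpLin_mul_same, toLpLin_mul_same, LinearMap.comp_apply, LinearMap.comp_apply,
        hψ, toEuclideanLin_oracleM_sum_tp_fHat, map_sum]
      simp only [toEuclideanLin_kronecker_tp, toLpLin_one, LinearMap.id_apply]
    · simp only [phaseKickback_eq_zero _ hsupp hk, map_zero]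
    · simp only [norm_toEuclideanLin_of_mem_unitaryGroup (hA _),
        sum_norm_phaseKickback_sq (isSymmetricProjection_phaseProj (ιW := ιW) hu), hnorm]

end Algorithm

section Success

open Finset

lemma norm_sum_smul_sq_le {𝕜 E α : Type*} [NormedField 𝕜] [SeminormedAddCommGroup E]
    [NormedSpace 𝕜 E] (s : Finset α) (c : α → 𝕜) (x : α → E) {r : ℝ}
    (hc : ∀ i ∈ s, ‖c i‖ ≤ r) :
    ‖∑ i ∈ s, c i • x i‖ ^ 2 ≤ r ^ 2 * #s * ∑ i ∈ s, ‖x i‖ ^ 2 := by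
  have hnorm : ‖∑ i ∈ s, c i • x i‖ ≤ r * ∑ i ∈ s, ‖x i‖ := by
    rw [mul_sum]
    refine (norm_sum_le _ _).trans (sum_le_sum fun i hi => ?_)
    rw [norm_smul]
    exact mul_le_mul_of_nonneg_right (hc i hi) (norm_nonneg _)
  calc ‖∑ i ∈ s, c i • x i‖ ^ 2 ≤ (r * ∑ i ∈ s, ‖x i‖) ^ 2 :=
        pow_le_pow_left₀ (norm_nonneg _) hnorm 2
    _ = r ^ 2 * (∑ i ∈ s, ‖x i‖) ^ 2 := mul_pow _ _ _
    _ ≤ r ^ 2 * (#s * ∑ i ∈ s, ‖x i‖ ^ 2) := by gcongr; exact sq_sum_le_card_mul_sum_sq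
    _ = r ^ 2 * #s * ∑ i ∈ s, ‖x i‖ ^ 2 := (mul_assoc _ _ _).symm

variable {ι : Type*} [Fintype ι] [DecidableEq ι] {N : ℕ} [NeZero N]

lemma sum_norm_kronecker_single_sq_le {P : Fin N → Matrix ι ι ℂ} (hsa : ∀ y, (P y)ᴴ = P y)
    (hidem : ∀ y, P y * P y = P y) (horth : ∀ y y', y ≠ y' → P y * P y' = 0)
    (φ : Fin N → EuclideanSpace ℂ ι) (s : Finset (Fin N)) (hφ : ∀ k ∉ s, φ k = 0) :
    ∑ y, ‖toEuclideanLin (P y ⊗ₖ single y y 1) (∑ k, tp (φ k) (fHat N k))‖ ^ 2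
      ≤ #s / N * ∑ k, ‖φ k‖ ^ 2 := by
  have hP y := isSymmetricProjection_toEuclideanLin (hsa y) (hidem y)
  have hPorth y y' (h : y ≠ y') : toEuclideanLin (P y) * toEuclideanLin (P y') = 0 := by
    rw [Module.End.mul_eq_comp, ← toLpLin_mul_same, horth y y' h, map_zero]
  have hy (y : Fin N) : ‖toEuclideanLin (P y ⊗ₖ single y y 1) (∑ k, tp (φ k) (fHat N k))‖ ^ 2
      ≤ (N : ℝ)⁻¹ * #s * ∑ k ∈ s, ‖toEuclideanLin (P y) (φ k)‖ ^ 2 := by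
    have hψ : toEuclideanLin (P y ⊗ₖ single y y 1) (∑ k, tp (φ k) (fHat N k))
        = tp (∑ k ∈ s, fHat N k y • toEuclideanLin (P y) (φ k)) (e N y) := by
      rw [map_sum, tp_sum_left,
        ← sum_subset (subset_univ s) fun k _ hk => by rw [hφ k hk, tp_zero_left, map_zero]]
      simp only [toEuclideanLin_kronecker_tp, toEuclideanLin_single_self, tp_smul_right,
        tp_smul_left]
    rw [hψ, norm_tp, norm_e, mul_one]
    refine (norm_sum_smul_sq_le s _ _ fun k _ => (norm_fHat_apply k y).le).trans_eq ?_
    rw [inv_pow, Real.sq_sqrt (Nat.cast_nonneg _)]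
  calc ∑ y, ‖toEuclideanLin (P y ⊗ₖ single y y 1) (∑ k, tp (φ k) (fHat N k))‖ ^ 2
      ≤ ∑ y, (N : ℝ)⁻¹ * #s * ∑ k ∈ s, ‖toEuclideanLin (P y) (φ k)‖ ^ 2 :=
        sum_le_sum fun y _ => hy y
    _ = (N : ℝ)⁻¹ * #s * ∑ k ∈ s, ∑ y, ‖toEuclideanLin (P y) (φ k)‖ ^ 2 := by
        rw [← mul_sum, sum_comm]
    _ ≤ (N : ℝ)⁻¹ * #s * ∑ k ∈ s, ‖φ k‖ ^ 2 := by
        gcongr with k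
        exact LinearMap.IsSymmetricProjection.sum_norm_map_sq_le _ hP hPorth _
    _ ≤ (N : ℝ)⁻¹ * #s * ∑ k, ‖φ k‖ ^ 2 := by
        gcongr
        exact subset_univ s
    _ = #s / N * ∑ k, ‖φ k‖ ^ 2 := by ring

end Success

theorem stmt_10_general {ιV ιW : Type*} [Fintype ιV] [DecidableEq ιV] [Fintype ιW] [DecidableEq ιW]
    {N : ℕ} [NeZero N] (u : EuclideanSpace ℂ ιV) (hu : ‖u‖ = 1) (q : ℕ)
    (A : ℕ → Matrix ((Fin 2 × ιV) × ιW) ((Fin 2 × ιV) × ιW) ℂ)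
    (hA : ∀ i, A i ∈ Matrix.unitaryGroup ((Fin 2 × ιV) × ιW) ℂ)
    (φ₀ : EuclideanSpace ℂ ((Fin 2 × ιV) × ιW)) (hφ₀ : ‖φ₀‖ = 1)
    (P : Fin N → Matrix ((Fin 2 × ιV) × ιW) ((Fin 2 × ιV) × ιW) ℂ)
    (hP_sa : ∀ y, (P y)ᴴ = P y) (hP_idem : ∀ y, P y * P y = P y)
    (hP_orth : ∀ y y', y ≠ y' → P y * P y' = 0)
    (p : ℝ)
    (hsucc : p ≤ ∑ y : Fin N,
        ‖Matrix.toEuclideanLin (P y ⊗ₖ Matrix.single y y (1 : ℂ))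
          (Matrix.toEuclideanLin (algOp A (oracleM N u ιW) q) (tp φ₀ (fHat N 0)))‖ ^ 2) :
    p * N - 1 ≤ (q : ℝ) := by
  obtain ⟨φ, hψ, hsupp, hnorm⟩ := exists_algOp_apply_eq_sum_tp_fHat (N := N) hu hA hφ₀ q
  set s := Finset.univ.filter fun k : Fin N => (k : ℕ) ≤ q
  have hs : (s.card : ℝ) ≤ q + 1 := by
    have : s.card ≤ (Finset.range (q + 1)).card := Finset.card_le_card_of_injOn Fin.val
      (fun k hk => by simpa [s, Nat.lt_succ_iff] using hk) Fin.val_injective.injOn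
    exact_mod_cast this.trans_eq (Finset.card_range _)
  have hbound := sum_norm_kronecker_single_sq_le hP_sa hP_idem hP_orth φ s
    fun k hk => hsupp k (by simpa [s] using hk)
  rw [← hψ, hnorm, mul_one] at hbound
  have hN : (0 : ℝ) < N := Nat.cast_pos.mpr (NeZero.pos N)
  have hp : p ≤ (q + 1) / N := (hsucc.trans hbound).trans (by gcongr)
  rw [le_div_iff₀ hN] at hp
  linarith

/-- **Query lower bound form of the main theorem.**
If a `q`-query algorithm solves the `N`-phase distinguishing problem with probability at
least `p ≥ 0` (success probability `∑_y ‖(Π_y ⊗ |e_y⟩⟨e_y|) ψ‖² ≥ p` for the final state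
`ψ`), then `q ≥ p·N - 1`. -/
theorem stmt_10 {ιV ιW : Type*} [Fintype ιV] [DecidableEq ιV] [Fintype ιW] [DecidableEq ιW]
    {N : ℕ} [NeZero N] (u : EuclideanSpace ℂ ιV) (hu : ‖u‖ = 1) (q : ℕ)
    (A : ℕ → Matrix ((Fin 2 × ιV) × ιW) ((Fin 2 × ιV) × ιW) ℂ)
    (hA : ∀ i, A i ∈ Matrix.unitaryGroup ((Fin 2 × ιV) × ιW) ℂ)
    (φ₀ : EuclideanSpace ℂ ((Fin 2 × ιV) × ιW)) (hφ₀ : ‖φ₀‖ = 1)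
    (P : Fin N → Matrix ((Fin 2 × ιV) × ιW) ((Fin 2 × ιV) × ιW) ℂ)
    (hP_sa : ∀ y, (P y)ᴴ = P y) (hP_idem : ∀ y, P y * P y = P y)
    (hP_orth : ∀ y y', y ≠ y' → P y * P y' = 0)
    (p : ℝ) (hp : 0 ≤ p)
    (hsucc : p ≤ ∑ y : Fin N,
        ‖Matrix.toEuclideanLin (P y ⊗ₖ Matrix.single y y (1 : ℂ))
          (Matrix.toEuclideanLin (algOp A (oracleM N u ιW) q) (tp φ₀ (fHat N 0)))‖ ^ 2) :
    p * N - 1 ≤ (q : ℝ) :=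
  stmt_10_general u hu q A hA φ₀ hφ₀ P hP_sa hP_idem hP_orth p hsucc
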